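/- Let n ≥ 1, let 1 ≤ m < n, and let w, u be permutations of {1,2,…,n} with w →^{r_m} u. Then for every j with 1 ≤ j ≤ m, the value u(j) lies in the set {w(1), w(2), …, w(m)} ∪ {w(b) : m < b ≤ n and w(b) > u(b)}. -/

import Mathlib

/-- The length (number of inversions) of a permutation of `Fin n`
(representing `{1,…,n}` with `i : Fin n` standing for `i+1`). -/
def invLength {n : ℕ} (w : Equiv.Perm (Fin n)) : ℕ :=
  (Finset.univ.filter fun p : Fin n × Fin n => p.1 < p.2 ∧ w p.2 < w p.1).card

/-- `w τ_{a₁b₁} ⋯ τ_{aₛbₛ}` for the list of pairs `L = [(a₁,b₁),…,(aₛ,bₛ)]`. -/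
def chainProd {n : ℕ} (w : Equiv.Perm (Fin n)) (L : List (Fin n × Fin n)) :
    Equiv.Perm (Fin n) :=
  w * (L.map fun p => Equiv.swap p.1 p.2).prod

/-- The list `L = [(a₁,b₁),…,(aₛ,bₛ)]` is a chain witnessing `w ≤ₘ u`:
each `aᵢ ≤ m < bᵢ` (in 1-indexed terms, i.e. `(aᵢ : ℕ) < m ≤ (bᵢ : ℕ)` in 0-indexed `Fin n`),
`u = w τ_{a₁b₁} ⋯ τ_{aₛbₛ}`, and `ℓ(w τ_{a₁b₁} ⋯ τ_{aᵢbᵢ}) = ℓ(w) + i` for all `i ≤ s`. -/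
def IsMChain {n : ℕ} (m : ℕ) (w u : Equiv.Perm (Fin n)) (L : List (Fin n × Fin n)) : Prop :=
  (∀ p ∈ L, (p.1 : ℕ) < m ∧ m ≤ (p.2 : ℕ)) ∧
  u = chainProd w L ∧
  ∀ i, i ≤ L.length → invLength (chainProd w (L.take i)) = invLength w + i

/-- The `m`-Bruhat order `w ≤ₘ u`. -/
def mBruhat {n : ℕ} (m : ℕ) (w u : Equiv.Perm (Fin n)) : Prop :=
  ∃ L, IsMChain m w u L

/-- `w →^{r_m} u` : as `w ≤ₘ u`, with the `bᵢ` pairwise distinct. -/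
def rmRel {n : ℕ} (m : ℕ) (w u : Equiv.Perm (Fin n)) : Prop :=
  ∃ L, IsMChain m w u L ∧ (L.map Prod.snd).Nodup

/-!
Write `u = w σ` with `σ = τ_{a₁b₁} ⋯ τ_{aₛbₛ}`. If `σ j ≥ m` for some `j < m`, then `σ j` is one
of the `bₖ`, since every `aᵢ < m`. As the `bᵢ` are distinct, `b = bₖ` is moved only by the `k`-th
transposition, so with `v = w τ_{a₁b₁} ⋯ τ_{aₖ₋₁bₖ₋₁}` we get `w b = v b` and `u b = v aₖ`. The
length of `v τ_{aₖb}` exceeds that of `v`, which forces `v aₖ < v b`: right multiplication by a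
transposition undoing an inversion `(a, b)` lowers the length, because the inversions of `v τ_{ab}`
inject into the inversions of `v` other than `(a, b)`.
-/

open Equiv

theorem inversion_of_swap_reverses {α β : Type*} [LinearOrder α] [DecidableEq α] [LinearOrder β]
    (v : α → β) {a b i j : α} (hab : a < b) (hv : v b < v a) (hij : i < j)
    (hrev : ¬ swap a b i < swap a b j) (hinv : v (swap a b j) < v (swap a b i)) :
    v j < v i ∧ (i, j) ≠ (a, b) := by
  have hτa := swap_apply_left a b
  have hτb := swap_apply_right a b
  have hτ : ∀ x, x ≠ a → x ≠ b → swap a b x = x := fun x => swap_apply_of_ne_of_ne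
  grind

def inversions {n : ℕ} (w : Perm (Fin n)) : Finset (Fin n × Fin n) :=
  Finset.univ.filter fun p => p.1 < p.2 ∧ w p.2 < w p.1

theorem mem_inversions {n : ℕ} {w : Perm (Fin n)} {p : Fin n × Fin n} :
    p ∈ inversions w ↔ p.1 < p.2 ∧ w p.2 < w p.1 := by
  simp [inversions]

theorem invLength_eq_card_inversions {n : ℕ} (w : Perm (Fin n)) :
    invLength w = (inversions w).card := rfl

theorem invLength_mul_swap_lt {n : ℕ} (v : Perm (Fin n)) {a b : Fin n} (hab : a < b)
    (hv : v b < v a) : invLength (v * swap a b) < invLength v := by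
  set τ := swap a b
  -- pairs whose order `τ` preserves are carried along by `τ`; the others are inversions of `v`
  let g : Fin n × Fin n → Fin n × Fin n := fun p =>
    if τ p.1 < τ p.2 then (τ p.1, τ p.2) else p
  have hmaps : ∀ p ∈ inversions (v * τ), g p ∈ (inversions v).erase (a, b) := by
    intro p hp
    rw [mem_inversions] at hp
    simp only [g, Finset.mem_erase, mem_inversions, ne_eq]
    split_ifs with hτ
    · refine ⟨fun h => ?_, hτ, hp.2⟩
      simp only [Prod.mk.injEq, τ, swap_apply_eq_iff, swap_apply_left, swap_apply_right] at h
      exact absurd (h.1 ▸ h.2 ▸ hp.1) (not_lt.2 hab.le)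
    · have := inversion_of_swap_reverses v hab hv hp.1 hτ hp.2
      exact ⟨this.2, hp.1, this.1⟩
  have hinj : Set.InjOn g (inversions (v * τ)) := by
    intro p hp q hq hpq
    rw [Finset.mem_coe, mem_inversions] at hp hq
    simp only [g] at hpq
    split_ifs at hpq with hp' hq' hq'
    · simpa [Prod.ext_iff, τ] using hpq
    · simp only [Prod.ext_iff] at hpq
      exact absurd (by simpa [← hpq.1, ← hpq.2, τ] using hp.1) hq'
    · simp only [Prod.ext_iff] at hpq
      exact absurd (by simpa [hpq.1, hpq.2, τ] using hq.1) hp'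
    · exact hpq
  rw [invLength_eq_card_inversions, invLength_eq_card_inversions]
  calc (inversions (v * τ)).card ≤ ((inversions v).erase (a, b)).card :=
        Finset.card_le_card_of_injOn g hmaps hinj
    _ < (inversions v).card := Finset.card_erase_lt_of_mem (mem_inversions.2 ⟨hab, hv⟩)

theorem apply_lt_apply_of_invLength_lt_mul_swap {n : ℕ} (v : Perm (Fin n)) {a b : Fin n}
    (hab : a < b) (h : invLength v < invLength (v * swap a b)) : v a < v b := by
  rcases lt_trichotomy (v a) (v b) with hlt | heq | hgt
  · exact hlt
  · exact absurd (v.injective heq) hab.ne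
  · exact absurd h (invLength_mul_swap_lt v hab hgt).asymm

section SwapProducts

variable {α : Type*} [DecidableEq α]

theorem prod_map_swap_apply_of_forall_ne {L : List (α × α)} {x : α}
    (hx : ∀ p ∈ L, x ≠ p.1 ∧ x ≠ p.2) : (L.map fun p => swap p.1 p.2).prod x = x := by
  induction L with
  | nil => rfl
  | cons q L ih =>
    rw [List.forall_mem_cons] at hx
    simp only [List.map_cons, List.prod_cons, Perm.mul_apply, ih hx.2,
      swap_apply_of_ne_of_ne hx.1.1 hx.1.2]

theorem exists_mem_of_prod_map_swap_apply_ne {L : List (α × α)} {x : α}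
    (hx : (L.map fun p => swap p.1 p.2).prod x ≠ x) :
    ∃ p ∈ L, (L.map fun p => swap p.1 p.2).prod x = p.1 ∨
      (L.map fun p => swap p.1 p.2).prod x = p.2 := by
  by_contra! h
  exact hx ((L.map fun p => swap p.1 p.2).prod.injective (prod_map_swap_apply_of_forall_ne h))

end SwapProducts

theorem chainProd_append {n : ℕ} (w : Perm (Fin n)) (L₁ L₂ : List (Fin n × Fin n)) :
    chainProd w (L₁ ++ L₂) = chainProd w L₁ * (L₂.map fun p => swap p.1 p.2).prod := by
  simp [chainProd, mul_assoc]

theorem IsMChain.invLength_lt_mul_swap {n m : ℕ} {w u : Perm (Fin n)}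
    {s t : List (Fin n × Fin n)} {p : Fin n × Fin n} (h : IsMChain m w u (s ++ p :: t)) :
    invLength (chainProd w s) < invLength (chainProd w s * swap p.1 p.2) := by
  have hs := h.2.2 s.length (by simp)
  have hsp := h.2.2 (s.length + 1) (by simp)
  rw [List.take_left] at hs
  rw [show (s ++ p :: t).take (s.length + 1) = s ++ [p] by simp [List.take_append],
    chainProd_append, List.map_singleton, List.prod_singleton] at hsp
  omega

theorem IsMChain.fst_lt_snd {n m : ℕ} {w u : Perm (Fin n)} {L : List (Fin n × Fin n)}
    (h : IsMChain m w u L) {p q : Fin n × Fin n} (hp : p ∈ L) (hq : q ∈ L) : q.1 < p.2 :=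
  Fin.lt_def.2 (lt_of_lt_of_le (h.1 q hq).1 (h.1 p hp).2)

theorem IsMChain.apply_snd_lt {n m : ℕ} {w u : Perm (Fin n)} {L : List (Fin n × Fin n)}
    (h : IsMChain m w u L) (hnd : (L.map Prod.snd).Nodup) {p : Fin n × Fin n} (hp : p ∈ L) :
    u p.2 < w p.2 := by
  obtain ⟨s, t, rfl⟩ := List.append_of_mem hp
  have hsnd : p.2 ∉ (s ++ t).map Prod.snd := by
    rw [List.map_append, List.map_cons, List.nodup_middle, List.nodup_cons] at hnd
    simpa using hnd.1
  have hfix : ∀ q ∈ s ++ t, p.2 ≠ q.1 ∧ p.2 ≠ q.2 := fun q hq =>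
    ⟨ne_of_gt (h.fst_lt_snd hp (List.mem_append.2 ((List.mem_append.1 hq).imp id
      (List.mem_cons_of_mem p)))), fun he => hsnd (he ▸ List.mem_map_of_mem hq)⟩
  have hw : chainProd w s p.2 = w p.2 := by
    simp only [chainProd, Perm.mul_apply]
    rw [prod_map_swap_apply_of_forall_ne fun q hq => hfix q (List.mem_append_left t hq)]
  have hu : u p.2 = chainProd w s p.1 := by
    rw [h.2.1, List.append_cons, chainProd_append, Perm.mul_apply,
      prod_map_swap_apply_of_forall_ne fun q hq => hfix q (List.mem_append_right s hq),
      chainProd_append]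
    simp
  calc u p.2 = chainProd w s p.1 := hu
    _ < chainProd w s p.2 := apply_lt_apply_of_invLength_lt_mul_swap _ (h.fst_lt_snd hp hp)
      h.invLength_lt_mul_swap
    _ = w p.2 := hw

theorem stmt5_general (n m : ℕ)
    (w u : Equiv.Perm (Fin n)) (h : rmRel m w u) :
    ∀ j : Fin n, (j : ℕ) < m →
      u j ∈ (Finset.univ.filter fun a : Fin n => (a : ℕ) < m).image w ∪
        (Finset.univ.filter fun b : Fin n => m ≤ (b : ℕ) ∧ u b < w b).image w := by
  obtain ⟨L, hL, hnd⟩ := h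
  intro j hj
  set σ := (L.map fun p => swap p.1 p.2).prod
  have huj : u j = w (σ j) := by rw [hL.2.1]; rfl
  rw [huj, Finset.mem_union]
  by_cases hσj : (σ j : ℕ) < m
  · exact Or.inl (Finset.mem_image_of_mem w (by simpa using hσj))
  · obtain ⟨p, hpL, hp | hp⟩ := exists_mem_of_prod_map_swap_apply_ne fun h => hσj (h ▸ hj)
    · exact absurd (hp ▸ (hL.1 p hpL).1) hσj
    · refine Or.inr (Finset.mem_image_of_mem w ?_)
      rw [hp]
      simpa using ⟨(hL.1 p hpL).2, hL.apply_snd_lt hnd hpL⟩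

/-- if `w →^{r_m} u` then for each `j ≤ m`,
`u(j) ∈ {w(1),…,w(m)} ∪ {w(b) : m < b ≤ n, w(b) > u(b)}`. -/
theorem stmt5 (n m : ℕ) (hn : 1 ≤ n) (hm : 1 ≤ m) (hmn : m < n)
    (w u : Equiv.Perm (Fin n)) (h : rmRel m w u) :
    ∀ j : Fin n, (j : ℕ) < m →
      u j ∈ (Finset.univ.filter fun a : Fin n => (a : ℕ) < m).image w ∪
        (Finset.univ.filter fun b : Fin n => m ≤ (b : ℕ) ∧ u b < w b).image w :=
  stmt5_general n m w u h
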